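/- arXiv:1611.00080 — 10 statements merged into one kernel-verified Lean document; each statement's English description precedes it below -/
import Mathlib

section
/- Let E be a real Hilbert space, C a bounded skew-symmetric operator on E that is a contraction, and let v be a nonzero vector in E. Then C²v = -v if and only if ‖Cv‖ = ‖v‖. -/
open scoped RealInnerProductSpace

theorem stmt0 {E : Type*} [NormedAddCommGroup E] [InnerProductSpace ℝ E]
    (C : E →L[ℝ] E)
    (hskew : ∀ v w : E, ⟪C v, w⟫ = -⟪v, C w⟫)
    (hcontr : ∀ v : E, ‖C v‖ ≤ ‖v‖)
    (v : E) (hv : v ≠ 0) :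
    C (C v) = -v ↔ ‖C v‖ = ‖v‖ := by
  have key : ⟪C (C v), v⟫ = -(‖C v‖ ^ 2) := by
    rw [hskew, real_inner_self_eq_norm_sq]
  constructor
  · intro h
    have h1 : ⟪C (C v), v⟫ = -(‖v‖ ^ 2) := by
      rw [h, inner_neg_left, real_inner_self_eq_norm_sq]
    nlinarith [norm_nonneg (C v), norm_nonneg v, key.symm.trans h1]
  · intro h
    have hle : ‖C (C v)‖ ≤ ‖v‖ := (hcontr (C v)).trans_eq h
    have expand : ‖C (C v) + v‖ ^ 2
        = ‖C (C v)‖ ^ 2 + 2 * ⟪C (C v), v⟫ + ‖v‖ ^ 2 := by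
      rw [norm_add_sq_real]
    have hz : ‖C (C v) + v‖ = 0 := by
      nlinarith [norm_nonneg (C (C v)), norm_nonneg v, norm_nonneg (C (C v) + v)]
    have : C (C v) + v = 0 := norm_eq_zero.mp hz
    exact eq_neg_of_add_eq_zero_left this
end

section
/- Let E be a real Hilbert space with complexification E_ℂ, and let C be a bounded skew-symmetric contraction on E, extended complex-linearly to E_ℂ. Then the real subspace V := (1 + iC)(E) ⊆ E_ℂ is closed, and for all v, w ∈ E one has ⟨σ((1+iC)v), (1+iC)w⟩ = ⟨(1 + C²)v, w⟩, where σ denotes complex conjugation on E_ℂ; in particular this expression is real and ⟨σξ, ξ⟩ ≥ 0 for all ξ ∈ V. -/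
open scoped ComplexInnerProductSpace

/-- For a real Hilbert space `E` with complexification `E_ℂ`
(modelled as a complex Hilbert space `H` with a conjugation `σ`, the real
points being `{v | σ v = v}`) and a bounded skew-symmetric contraction `C`
(extended complex-linearly), the real subspace `V = (1 + iC)E` is closed, and
for real `v, w` one has `⟪σ((1+iC)v), (1+iC)w⟫ = ⟪(1+C²)v, w⟫`; in particular
this is real, and `⟪σξ, ξ⟫ ≥ 0` for all `ξ ∈ V`. -/
theorem stmt2 {H : Type*} [NormedAddCommGroup H] [InnerProductSpace ℂ H] [CompleteSpace H]
    (σ : H →ₛₗ[starRingEnd ℂ] H)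
    (hσ2 : ∀ x, σ (σ x) = x)
    (hσinner : ∀ x y, ⟪σ x, σ y⟫ = ⟪y, x⟫)
    (C : H →L[ℂ] H)
    (hCσ : ∀ x, σ (C x) = C (σ x))
    (hskew : ∀ x y, ⟪C x, y⟫ = -⟪x, C y⟫)
    (hcontr : ∀ x, ‖C x‖ ≤ ‖x‖) :
    IsClosed {x : H | ∃ v, σ v = v ∧ x = v + Complex.I • C v} ∧
    (∀ v w : H, σ v = v → σ w = w →
      ⟪σ (v + Complex.I • C v), w + Complex.I • C w⟫ = ⟪v + C (C v), w⟫ ∧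
      (⟪σ (v + Complex.I • C v), w + Complex.I • C w⟫).im = 0) ∧
    (∀ ξ ∈ {x : H | ∃ v, σ v = v ∧ x = v + Complex.I • C v},
      0 ≤ (⟪σ ξ, ξ⟫).re) := by
  -- real u implies ⟪u, C u⟫ = 0
  have lemA : ∀ u : H, σ u = u → ⟪u, C u⟫ = 0 := by
    intro u hu
    have h1 := hσinner u (C u)
    rw [hu, hCσ, hu] at h1
    have h2 := hskew u u
    linear_combination (h1 + h2) / 2
  -- σ of (1+iC)v for real v
  have hσT : ∀ v : H, σ v = v → σ (v + Complex.I • C v) = v - Complex.I • C v := by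
    intro v hv
    rw [map_add, map_smulₛₗ, hCσ, hv]
    simp [Complex.conj_I, neg_smul, sub_eq_add_neg]
  -- main identity
  have main : ∀ v w : H, σ v = v → σ w = w →
      ⟪σ (v + Complex.I • C v), w + Complex.I • C w⟫ = ⟪v + C (C v), w⟫ := by
    intro v w hv hw
    rw [hσT v hv]
    rw [inner_sub_left, inner_add_right, inner_add_right, inner_add_left,
      inner_smul_left, inner_smul_right, inner_smul_right, inner_smul_left,
      Complex.conj_I]
    have h1 := hskew v w
    have h2 := hskew v (C w)
    have h3 := hskew (C v) w
    rw [h1, h3, h2]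
    linear_combination (-⟪v, C (C w)⟫) * Complex.I_sq
  -- norm lower bound
  have hnorm : ∀ u : H, σ u = u → ‖u‖ ≤ ‖u + Complex.I • C u‖ := by
    intro u hu
    have h0 : ⟪u, Complex.I • C u⟫ = 0 := by
      rw [inner_smul_right, lemA u hu, mul_zero]
    have hsq := @norm_add_sq ℂ _ _ _ _ u (Complex.I • C u)
    rw [h0] at hsq
    simp only [map_zero, mul_zero, add_zero] at hsq
    nlinarith [norm_nonneg u, norm_nonneg (u + Complex.I • C u),
      norm_nonneg (Complex.I • C u)]
  -- σ is continuous
  have hσcont : Continuous σ := by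
    have hiso : Isometry σ := by
      apply AddMonoidHomClass.isometry_of_norm
      intro x
      have h := hσinner x x
      have e1 : (⟪σ x, σ x⟫).re = ‖σ x‖ ^ 2 := by
        have := @inner_self_eq_norm_sq ℂ H _ _ _ (σ x)
        simpa [RCLike.re_to_complex] using this
      have e2 : (⟪x, x⟫).re = ‖x‖ ^ 2 := by
        have := @inner_self_eq_norm_sq ℂ H _ _ _ x
        simpa [RCLike.re_to_complex] using this
      have h3 : ‖σ x‖ ^ 2 = ‖x‖ ^ 2 := by rw [← e1, ← e2, h]
      nlinarith [norm_nonneg (σ x), norm_nonneg x]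
    exact hiso.continuous
  refine ⟨?_, ?_, ?_⟩
  · -- closedness
    apply IsSeqClosed.isClosed
    intro xs x hmem hx
    choose v hv1 hv2 using hmem
    have hvC : CauchySeq v := by
      rw [Metric.cauchySeq_iff]
      intro ε hε
      obtain ⟨N, hN⟩ := Metric.cauchySeq_iff.mp hx.cauchySeq ε hε
      refine ⟨N, fun m hm n hn => lt_of_le_of_lt ?_ (hN m hm n hn)⟩
      have hreal : σ (v m - v n) = v m - v n := by
        rw [map_sub, hv1, hv1]
      have hle := hnorm (v m - v n) hreal
      have heq : (v m - v n) + Complex.I • C (v m - v n) = xs m - xs n := by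
        rw [hv2 m, hv2 n, map_sub]
        module
      rw [heq] at hle
      simpa [dist_eq_norm] using hle
    obtain ⟨l, hl⟩ := cauchySeq_tendsto_of_complete hvC
    have hσl : σ l = l := by
      have h1 : Filter.Tendsto (fun n => σ (v n)) Filter.atTop (nhds (σ l)) :=
        (hσcont.tendsto l).comp hl
      have h2 : (fun n => σ (v n)) = v := funext hv1
      rw [h2] at h1
      exact tendsto_nhds_unique h1 hl
    refine ⟨l, hσl, ?_⟩
    have h1 : Filter.Tendsto xs Filter.atTop (nhds (l + Complex.I • C l)) := by
      have h2 : Filter.Tendsto (fun n => v n + Complex.I • C (v n)) Filter.atTop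
          (nhds (l + Complex.I • C l)) :=
        hl.add (((C.continuous.tendsto l).comp hl).const_smul _)
      have h3 : (fun n => v n + Complex.I • C (v n)) = xs := funext fun n => (hv2 n).symm
      rwa [h3] at h2
    exact tendsto_nhds_unique hx h1
  · -- main identity and realness
    intro v w hv hw
    refine ⟨main v w hv hw, ?_⟩
    rw [main v w hv hw]
    have hreal : σ (v + C (C v)) = v + C (C v) := by
      rw [map_add, hCσ, hCσ, hv]
    have h1 := hσinner (v + C (C v)) w
    rw [hreal, hw] at h1
    have h2 : ⟪w, v + C (C v)⟫ = (starRingEnd ℂ) ⟪v + C (C v), w⟫ :=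
      (inner_conj_symm _ _).symm
    rw [h2] at h1
    have := Complex.conj_eq_iff_im.mp h1.symm
    exact this
  · -- nonnegativity
    intro ξ hξ
    obtain ⟨v, hv, rfl⟩ := hξ
    rw [main v v hv hv]
    have h3 := hskew (C v) v
    rw [inner_add_left, h3]
    have e1 : (⟪v, v⟫).re = ‖v‖ ^ 2 := by
      have := @inner_self_eq_norm_sq ℂ H _ _ _ v
      simpa [RCLike.re_to_complex] using this
    have e2 : (⟪C v, C v⟫).re = ‖C v‖ ^ 2 := by
      have := @inner_self_eq_norm_sq ℂ H _ _ _ (C v)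
      simpa [RCLike.re_to_complex] using this
    have hc := hcontr v
    rw [Complex.add_re, Complex.neg_re, e1, e2]
    nlinarith [norm_nonneg (C v), norm_nonneg v]
end

section
/- Let E be a real Hilbert space and C a bounded skew-symmetric contraction on E, extended to the complexification E_ℂ. Set V := (1 + iC)(E). Then V ∩ iV = {0} if and only if 1 + C² is injective on E. -/
open scoped ComplexInnerProductSpace

/-- With `V = (1 + iC)E ⊆ E_ℂ` (complexification modelled via a
conjugation `σ` on a complex Hilbert space `H`, real points `{v | σ v = v}`),
one has `V ∩ iV = {0}` iff `1 + C²` is injective on the real points. -/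
theorem stmt3 {H : Type*} [NormedAddCommGroup H] [InnerProductSpace ℂ H] [CompleteSpace H]
    (σ : H →ₛₗ[starRingEnd ℂ] H)
    (hσ2 : ∀ x, σ (σ x) = x)
    (hσinner : ∀ x y, ⟪σ x, σ y⟫ = ⟪y, x⟫)
    (C : H →L[ℂ] H)
    (hCσ : ∀ x, σ (C x) = C (σ x))
    (hskew : ∀ x y, ⟪C x, y⟫ = -⟪x, C y⟫)
    (hcontr : ∀ x, ‖C x‖ ≤ ‖x‖) :
    ({x : H | ∃ v, σ v = v ∧ x = v + Complex.I • C v} ∩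
      {x : H | ∃ v, σ v = v ∧ x = Complex.I • (v + Complex.I • C v)} = {0}) ↔
    (∀ v : H, σ v = v → v + C (C v) = 0 → v = 0) := by
  have hσI : ∀ x : H, σ (Complex.I • x) = (-Complex.I) • σ x := by
    intro x
    rw [σ.map_smulₛₗ]
    norm_num [Complex.conj_I]
  constructor
  · intro h v hv hveq
    have hCv : σ (C v) = C v := by rw [hCσ, hv]
    have hmem : v + Complex.I • C v ∈
        ({x : H | ∃ v, σ v = v ∧ x = v + Complex.I • C v} ∩
         {x : H | ∃ v, σ v = v ∧ x = Complex.I • (v + Complex.I • C v)}) := by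
      constructor
      · exact ⟨v, hv, rfl⟩
      · refine ⟨C v, hCv, ?_⟩
        have hCCv : C (C v) = -v := by
          have := hveq
          rw [add_eq_zero_iff_eq_neg] at this
          linear_combination (norm := module) this
        rw [smul_add, smul_smul, Complex.I_mul_I, hCCv]
        module
    rw [h] at hmem
    have h0 : v + Complex.I • C v = 0 := hmem
    have h0' : v + (-Complex.I) • C v = 0 := by
      have := congrArg σ h0
      rw [map_add, hσI, hv, hCv, map_zero] at this
      exact this
    have h2 : (2 : ℂ) • v = 0 := by linear_combination (norm := module) h0 + h0'
    have := smul_eq_zero.mp h2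
    simpa using this
  · intro h
    ext x
    simp only [Set.mem_inter_iff, Set.mem_setOf_eq, Set.mem_singleton_iff]
    constructor
    · rintro ⟨⟨v, hv, hxv⟩, ⟨w, hw, hxw⟩⟩
      have hCv : σ (C v) = C v := by rw [hCσ, hv]
      have hCw : σ (C w) = C w := by rw [hCσ, hw]
      have eq1 : v + Complex.I • C v = Complex.I • w + (Complex.I * Complex.I) • C w := by
        rw [← hxv, hxw, smul_add, smul_smul]
      have eq2 : v + (-Complex.I) • C v
          = (-Complex.I) • w + (Complex.I * Complex.I) • C w := by
        have := congrArg σ eq1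
        rw [map_add, map_add, hσI, hσI, σ.map_smulₛₗ, hv, hCv, hw, hCw] at this
        simpa [Complex.conj_I] using this
      rw [Complex.I_mul_I] at eq1 eq2
      have hvw : (2:ℂ) • v = (2:ℂ) • (-C w) := by
        linear_combination (norm := module) eq1 + eq2
      have hv' : v = -C w := by
        have := smul_right_injective H (by norm_num : (2:ℂ) ≠ 0) hvw
        exact this
      have hCvw : ((2:ℂ) * Complex.I) • C v = ((2:ℂ) * Complex.I) • w := by
        linear_combination (norm := module) eq1 - eq2
      have hCv' : C v = w := smul_right_injective H (by simp [Complex.I_ne_zero] : (2:ℂ) * Complex.I ≠ 0) hCvw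
      have hw0 : w = 0 := by
        apply h w hw
        have : w + C (C w) = C v + C (C w) := by rw [hCv']
        rw [this, hv']
        simp
      have hv0 : v = 0 := by rw [hv', hw0, map_zero, neg_zero]
      rw [hxv, hv0]
      simp
    · rintro rfl
      refine ⟨⟨0, map_zero σ, by simp⟩, ⟨0, map_zero σ, by simp⟩⟩
end

section
/- Let E be a real Hilbert space and C a bounded skew-symmetric contraction on E, extended to E_ℂ. Set V := (1 + iC)(E). Then V + iV is dense in E_ℂ if and only if the operator 1 + iC on E_ℂ is injective. -/
/-! Every vector of `E_ℂ` splits as `v + i w` with `v, w` fixed by the conjugation, so by linearity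
`V + iV` is the whole range of `T = 1 + iC`. Since `T` is symmetric, `(range T)ᗮ = ker T`, and in a
Hilbert space a subspace is dense exactly when its orthogonal complement vanishes. -/

open Complex
open scoped ComplexInnerProductSpace

section Conjugation

variable {E F : Type*} [AddCommGroup E] [Module ℂ E] [AddCommGroup F] [Module ℂ F]
  {σ : E →ₛₗ[starRingEnd ℂ] E}

theorem exists_fixed_add_I_smul_fixed (hσ : ∀ x, σ (σ x) = x) (x : E) :
    ∃ v w, σ v = v ∧ σ w = w ∧ x = v + I • w := by
  refine ⟨(2⁻¹ : ℂ) • (x + σ x), (-I * 2⁻¹) • (x - σ x), ?_, ?_, ?_⟩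
  · rw [map_smulₛₗ, map_add, hσ, show starRingEnd ℂ 2⁻¹ = 2⁻¹ by simp [Complex.ext_iff]]
    module
  · rw [map_smulₛₗ, map_sub, hσ, show starRingEnd ℂ (-I * 2⁻¹) = I * 2⁻¹ by simp [Complex.ext_iff]]
    module
  · rw [smul_smul, ← mul_assoc, mul_neg, I_mul_I, neg_neg, one_mul]
    module

theorem setOf_map_fixed_add_I_smul_map_fixed (hσ : ∀ x, σ (σ x) = x) (T : E →ₗ[ℂ] F) :
    {z | ∃ v w, σ v = v ∧ σ w = w ∧ z = T v + I • T w} = Set.range T := by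
  ext z
  constructor
  · rintro ⟨v, w, -, -, rfl⟩
    exact ⟨v + I • w, by rw [map_add, map_smul]⟩
  · rintro ⟨x, rfl⟩
    obtain ⟨v, w, hv, hw, rfl⟩ := exists_fixed_add_I_smul_fixed hσ x
    exact ⟨v, w, hv, hw, by rw [map_add, map_smul]⟩

end Conjugation

section Symmetric

variable {𝕜 E : Type*} [RCLike 𝕜] [NormedAddCommGroup E] [InnerProductSpace 𝕜 E] [CompleteSpace E]

theorem LinearMap.IsSymmetric.denseRange_iff_injective {T : E →ₗ[𝕜] E} (hT : T.IsSymmetric) :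
    DenseRange T ↔ Function.Injective T := by
  rw [DenseRange, ← LinearMap.coe_range, Submodule.dense_iff_topologicalClosure_eq_top,
    Submodule.topologicalClosure_eq_top_iff, hT.orthogonal_range, LinearMap.ker_eq_bot]

end Symmetric

theorem LinearMap.isSymmetric_I_smul_of_skew {E : Type*} [NormedAddCommGroup E]
    [InnerProductSpace ℂ E] {C : E →ₗ[ℂ] E} (hskew : ∀ x y, ⟪C x, y⟫ = -⟪x, C y⟫) :
    (I • C).IsSymmetric := fun x y => by
  simp [inner_smul_left, inner_smul_right, hskew]

theorem stmt4_general {H : Type*} [NormedAddCommGroup H] [InnerProductSpace ℂ H] [CompleteSpace H]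
    (σ : H →ₛₗ[starRingEnd ℂ] H)
    (hσ2 : ∀ x, σ (σ x) = x)
    (C : H →L[ℂ] H)
    (hskew : ∀ x y, ⟪C x, y⟫ = -⟪x, C y⟫) :
    Dense {z : H | ∃ v w, σ v = v ∧ σ w = w ∧
        z = (v + Complex.I • C v) + Complex.I • (w + Complex.I • C w)} ↔
    Function.Injective (fun x : H => x + Complex.I • C x) := by
  let T : H →ₗ[ℂ] H := LinearMap.id + I • (C : H →ₗ[ℂ] H)
  have hT : T.IsSymmetric :=
    LinearMap.IsSymmetric.id.add (LinearMap.isSymmetric_I_smul_of_skew hskew)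
  have hrange := setOf_map_fixed_add_I_smul_map_fixed hσ2 T
  exact hrange ▸ hT.denseRange_iff_injective

/-- With `V = (1 + iC)E ⊆ E_ℂ` (complexification modelled via a
conjugation `σ` on a complex Hilbert space `H`), `V + iV` is dense in `E_ℂ`
iff the operator `1 + iC` on `E_ℂ` is injective. -/
theorem stmt4 {H : Type*} [NormedAddCommGroup H] [InnerProductSpace ℂ H] [CompleteSpace H]
    (σ : H →ₛₗ[starRingEnd ℂ] H)
    (hσ2 : ∀ x, σ (σ x) = x)
    (hσinner : ∀ x y, ⟪σ x, σ y⟫ = ⟪y, x⟫)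
    (C : H →L[ℂ] H)
    (hCσ : ∀ x, σ (C x) = C (σ x))
    (hskew : ∀ x y, ⟪C x, y⟫ = -⟪x, C y⟫)
    (hcontr : ∀ x, ‖C x‖ ≤ ‖x‖) :
    Dense {z : H | ∃ v w, σ v = v ∧ σ w = w ∧
        z = (v + Complex.I • C v) + Complex.I • (w + Complex.I • C w)} ↔
    Function.Injective (fun x : H => x + Complex.I • C x) :=
  stmt4_general σ hσ2 C hskew
end

section
/- Let E be a real Hilbert space and C a bounded skew-symmetric contraction on E with C² + 1 injective. Define V := (1 + iC)(E) ⊆ E_ℂ. Then V is a standard real subspace of E_ℂ, i.e., V is closed, V ∩ iV = {0}, and V + iV is dense in E_ℂ. -/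
/-! Let `σ` be the conjugation of `H = E_ℂ`, so that every `z` is `a + i b` with `a`, `b` real.
The operator `T = 1 + iC` of `H` is self-adjoint, as `C` and `i` are both skew, and it is
injective: for real `a`, `b`, the equation `T (a + i b) = (a - C b) + i (b + C a) = 0` forces
`a = C b` and `b + C² b = 0`. Injectivity of `T` gives `V ∩ iV = {0}`, and self-adjointness turns
it into density of its range, which is `V + iV`. Finally `V` is closed because `v ↦ v + i C v` has
the continuous left inverse `x ↦ (x + σ x) / 2` on the real points. -/

open scoped ComplexInnerProductSpace

open Complex

section Module

variable {M : Type*} [AddCommGroup M] [Module ℂ M]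

noncomputable def conjRe (σ : M →ₛₗ[starRingEnd ℂ] M) (z : M) : M := (2⁻¹ : ℂ) • (z + σ z)

variable {σ : M →ₛₗ[starRingEnd ℂ] M}

theorem map_add_I_smul_of_fixed {a b : M} (ha : σ a = a) (hb : σ b = b) :
    σ (a + I • b) = a - I • b := by
  rw [map_add, map_smulₛₗ, ha, hb, conj_I, neg_smul, sub_eq_add_neg]

theorem eq_zero_of_add_I_smul_eq_zero {a b : M} (ha : σ a = a) (hb : σ b = b)
    (h : a + I • b = 0) : a = 0 ∧ b = 0 := by
  have h' : a - I • b = 0 := by rw [← map_add_I_smul_of_fixed ha hb, h, map_zero]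
  have ha0 : a = 0 := by
    rw [show a = (2⁻¹ : ℂ) • ((a + I • b) + (a - I • b)) by module, h, h', add_zero, smul_zero]
  refine ⟨ha0, (smul_eq_zero_iff_right I_ne_zero).mp ?_⟩
  rwa [ha0, zero_add] at h

theorem map_conjRe (hσ2 : ∀ x, σ (σ x) = x) (z : M) : σ (conjRe σ z) = conjRe σ z := by
  rw [conjRe, map_smulₛₗ, map_add, hσ2, map_inv₀, map_ofNat]
  module

theorem conjRe_add_I_smul {a b : M} (ha : σ a = a) (hb : σ b = b) : conjRe σ (a + I • b) = a := by
  rw [conjRe, map_add_I_smul_of_fixed ha hb]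
  module

theorem exists_fixed_add_I_smul (hσ2 : ∀ x, σ (σ x) = x) (z : M) :
    ∃ a b, σ a = a ∧ σ b = b ∧ z = a + I • b := by
  refine ⟨conjRe σ z, conjRe σ (-(I • z)), map_conjRe hσ2 z, map_conjRe hσ2 _, ?_⟩
  rw [conjRe, conjRe, map_neg, map_smulₛₗ, conj_I, neg_smul, neg_neg]
  linear_combination (norm := module) I_sq • ((2⁻¹ : ℂ) • (z - σ z))

theorem eq_zero_of_add_I_smul_map_eq_zero (hσ2 : ∀ x, σ (σ x) = x) {C : M →ₗ[ℂ] M}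
    (hCσ : ∀ x, σ (C x) = C (σ x)) (hinj : ∀ v, σ v = v → v + C (C v) = 0 → v = 0) {z : M}
    (hz : z + I • C z = 0) : z = 0 := by
  obtain ⟨a, b, ha, hb, rfl⟩ := exists_fixed_add_I_smul hσ2 z
  have hsplit : (a - C b) + I • (b + C a) = 0 := by
    rw [map_add, map_smul] at hz
    linear_combination (norm := module) hz + I_sq • (-C b)
  obtain ⟨hab, hba⟩ := eq_zero_of_add_I_smul_eq_zero
    (by rw [map_sub, hCσ, ha, hb]) (by rw [map_add, hCσ, ha, hb]) hsplit
  rw [sub_eq_zero] at hab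
  have hb0 : b = 0 := hinj b hb (by rwa [hab] at hba)
  rw [hab, hb0, map_zero, smul_zero, add_zero]

theorem setOf_fixed_add_I_smul_inter_I_smul_eq_zero {C : M →ₗ[ℂ] M}
    (hker : ∀ z, z + I • C z = 0 → z = 0) :
    {x : M | ∃ v, σ v = v ∧ x = v + I • C v} ∩
      {x : M | ∃ v, σ v = v ∧ x = I • (v + I • C v)} = {0} := by
  refine Set.eq_singleton_iff_unique_mem.mpr
    ⟨⟨⟨0, map_zero σ, by simp⟩, 0, map_zero σ, by simp⟩, ?_⟩
  rintro x ⟨⟨v, hv, rfl⟩, w, hw, hx⟩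
  have hvw : v + I • (-w) = 0 := by
    refine hker _ ?_
    rw [map_add, map_smul, map_neg]
    linear_combination (norm := module) hx
  obtain ⟨rfl, -⟩ := eq_zero_of_add_I_smul_eq_zero hv (by rw [map_neg, hw]) hvw
  rw [map_zero, smul_zero, add_zero]

end Module

section Topology

variable {M : Type*} [AddCommGroup M] [Module ℂ M] [TopologicalSpace M] [T2Space M]
  [ContinuousAdd M] [ContinuousConstSMul ℂ M] {σ : M →ₛₗ[starRingEnd ℂ] M}

theorem isClosed_setOf_fixed_add_I_smul (hσ : Continuous σ) (hσ2 : ∀ x, σ (σ x) = x)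
    {C : M →L[ℂ] M} (hCσ : ∀ x, σ (C x) = C (σ x)) :
    IsClosed {x : M | ∃ v, σ v = v ∧ x = v + I • C v} := by
  let f : M → {v // σ v = v} := fun x ↦ ⟨conjRe σ x, map_conjRe hσ2 x⟩
  let g : {v // σ v = v} → M := fun v ↦ v + I • C v
  have hfg : Function.LeftInverse f g := fun v ↦
    Subtype.ext (conjRe_add_I_smul v.2 (by rw [hCσ, v.2]))
  have hf : Continuous f := ((continuous_id.add hσ).const_smul _).subtype_mk _
  have hg : Continuous g := by fun_prop
  convert hfg.isClosed_range hf hg using 1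
  ext x
  exact ⟨fun ⟨v, hv, hx⟩ ↦ ⟨⟨v, hv⟩, hx.symm⟩, fun ⟨v, hx⟩ ↦ ⟨v, v.2, hx.symm⟩⟩

end Topology

theorem IsSelfAdjoint.denseRange_of_injective {𝕜 : Type*} [RCLike 𝕜] {E : Type*}
    [NormedAddCommGroup E] [InnerProductSpace 𝕜 E] [CompleteSpace E] {T : E →L[𝕜] E}
    (hT : IsSelfAdjoint T) (hinj : Function.Injective T) : DenseRange T := by
  have : T.range.topologicalClosure = ⊤ := by
    rw [Submodule.topologicalClosure_eq_top_iff, ContinuousLinearMap.orthogonal_range,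
      hT.adjoint_eq]
    exact LinearMap.ker_eq_bot.mpr hinj
  exact Submodule.dense_iff_topologicalClosure_eq_top.mpr this

section InnerProductSpace

variable {H : Type*} [NormedAddCommGroup H] [InnerProductSpace ℂ H]

theorem norm_map_of_inner_map_map {σ : H →ₛₗ[starRingEnd ℂ] H}
    (hσ : ∀ x y, ⟪σ x, σ y⟫ = ⟪y, x⟫) (x : H) : ‖σ x‖ = ‖x‖ := by
  have h : ‖σ x‖ ^ 2 = ‖x‖ ^ 2 := by
    rw [@norm_sq_eq_re_inner ℂ, @norm_sq_eq_re_inner ℂ, hσ]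
  exact (sq_eq_sq₀ (norm_nonneg _) (norm_nonneg _)).mp h

theorem continuous_of_inner_map_map {σ : H →ₛₗ[starRingEnd ℂ] H}
    (hσ : ∀ x y, ⟪σ x, σ y⟫ = ⟪y, x⟫) : Continuous σ :=
  (AddMonoidHomClass.isometry_of_norm σ (norm_map_of_inner_map_map hσ)).continuous

variable [CompleteSpace H]

theorem mem_skewAdjoint_of_inner_map_left {C : H →L[ℂ] H}
    (hskew : ∀ x y, ⟪C x, y⟫ = -⟪x, C y⟫) : C ∈ skewAdjoint (H →L[ℂ] H) := by
  rw [skewAdjoint.mem_iff, ContinuousLinearMap.star_eq_adjoint]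
  exact ((ContinuousLinearMap.eq_adjoint_iff (-C) C).mpr fun x y ↦ by simp [hskew]).symm

theorem dense_setOf_fixed_add_I_smul {σ : H →ₛₗ[starRingEnd ℂ] H} (hσ2 : ∀ x, σ (σ x) = x)
    {C : H →L[ℂ] H} (hskew : ∀ x y, ⟪C x, y⟫ = -⟪x, C y⟫)
    (hker : ∀ z, z + I • C z = 0 → z = 0) :
    Dense {z : H | ∃ v w, σ v = v ∧ σ w = w ∧ z = (v + I • C v) + I • (w + I • C w)} := by
  have hT : IsSelfAdjoint (1 + I • C : H →L[ℂ] H) := (IsSelfAdjoint.one _).add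
    (isSelfAdjoint_smul_of_mem_skewAdjoint I_mem_skewAdjoint
      (mem_skewAdjoint_of_inner_map_left hskew))
  have hinj : Function.Injective (1 + I • C : H →L[ℂ] H) := (injective_iff_map_eq_zero _).mpr hker
  refine Dense.mono ?_ (hT.denseRange_of_injective hinj)
  rintro _ ⟨z, rfl⟩
  obtain ⟨v, w, hv, hw, rfl⟩ := exists_fixed_add_I_smul hσ2 z
  refine ⟨v, w, hv, hw, ?_⟩
  simp only [add_apply, one_apply_eq_self, smul_apply, map_add, map_smul]

end InnerProductSpace

theorem stmt5_general {H : Type*} [NormedAddCommGroup H] [InnerProductSpace ℂ H] [CompleteSpace H]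
    (σ : H →ₛₗ[starRingEnd ℂ] H)
    (hσ2 : ∀ x, σ (σ x) = x)
    (hσinner : ∀ x y, ⟪σ x, σ y⟫ = ⟪y, x⟫)
    (C : H →L[ℂ] H)
    (hCσ : ∀ x, σ (C x) = C (σ x))
    (hskew : ∀ x y, ⟪C x, y⟫ = -⟪x, C y⟫)
    (hinj : ∀ v : H, σ v = v → v + C (C v) = 0 → v = 0) :
    IsClosed {x : H | ∃ v, σ v = v ∧ x = v + Complex.I • C v} ∧
    ({x : H | ∃ v, σ v = v ∧ x = v + Complex.I • C v} ∩
      {x : H | ∃ v, σ v = v ∧ x = Complex.I • (v + Complex.I • C v)} = {0}) ∧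
    Dense {z : H | ∃ v w, σ v = v ∧ σ w = w ∧
        z = (v + Complex.I • C v) + Complex.I • (w + Complex.I • C w)} := by
  have hker : ∀ z, z + I • C z = 0 → z = 0 := fun _ ↦
    eq_zero_of_add_I_smul_map_eq_zero (C := C.toLinearMap) hσ2 hCσ hinj
  exact ⟨isClosed_setOf_fixed_add_I_smul (continuous_of_inner_map_map hσinner) hσ2 hCσ,
    setOf_fixed_add_I_smul_inter_I_smul_eq_zero (C := C.toLinearMap) hker,
    dense_setOf_fixed_add_I_smul hσ2 hskew hker⟩

/-- If `C` is a bounded skew-symmetric contraction on a real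
Hilbert space `E` with `1 + C²` injective, then `V = (1 + iC)E` is a standard
real subspace of `E_ℂ`: it is closed, `V ∩ iV = {0}`, and `V + iV` is dense.
The complexification is modelled via a conjugation `σ` on a complex Hilbert
space `H`, the real points being `{v | σ v = v}`. -/
theorem stmt5 {H : Type*} [NormedAddCommGroup H] [InnerProductSpace ℂ H] [CompleteSpace H]
    (σ : H →ₛₗ[starRingEnd ℂ] H)
    (hσ2 : ∀ x, σ (σ x) = x)
    (hσinner : ∀ x y, ⟪σ x, σ y⟫ = ⟪y, x⟫)
    (C : H →L[ℂ] H)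
    (hCσ : ∀ x, σ (C x) = C (σ x))
    (hskew : ∀ x y, ⟪C x, y⟫ = -⟪x, C y⟫)
    (hcontr : ∀ x, ‖C x‖ ≤ ‖x‖)
    (hinj : ∀ v : H, σ v = v → v + C (C v) = 0 → v = 0) :
    IsClosed {x : H | ∃ v, σ v = v ∧ x = v + Complex.I • C v} ∧
    ({x : H | ∃ v, σ v = v ∧ x = v + Complex.I • C v} ∩
      {x : H | ∃ v, σ v = v ∧ x = Complex.I • (v + Complex.I • C v)} = {0}) ∧
    Dense {z : H | ∃ v w, σ v = v ∧ σ w = w ∧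
        z = (v + Complex.I • C v) + Complex.I • (w + Complex.I • C w)} :=
  stmt5_general σ hσ2 hσinner C hCσ hskew hinj
end

section
/- Let V be a real vector space, γ a symmetric bilinear form and ω a skew-symmetric bilinear form on V, both real-valued, and set h := γ + iω : V × V → ℂ. If γ is positive semidefinite and ω(v,w)² ≤ γ(v,v)·γ(w,w) for all v, w ∈ V, then h is a positive definite kernel on V (i.e., for all finite families v₁,…,vₙ ∈ V and c₁,…,cₙ ∈ ℂ, the sum ∑_{j,k} conj(c_j) c_k h(v_j, v_k) is nonnegative real). -/
open scoped ComplexOrder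

/-- If `γ` is a positive semidefinite symmetric bilinear form and
`ω` a skew-symmetric bilinear form on a real vector space `V` with
`ω(v,w)² ≤ γ(v,v)γ(w,w)`, then `h = γ + iω` is a positive definite kernel. -/
theorem stmt6 {V : Type*} [AddCommGroup V] [Module ℝ V]
    (γ ω : V →ₗ[ℝ] V →ₗ[ℝ] ℝ)
    (hγsymm : ∀ v w, γ v w = γ w v)
    (hωskew : ∀ v w, ω v w = -ω w v)
    (hγpos : ∀ v, 0 ≤ γ v v)
    (hbound : ∀ v w, (ω v w) ^ 2 ≤ γ v v * γ w w) :
    ∀ (n : ℕ) (x : Fin n → V) (c : Fin n → ℂ),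
      0 ≤ ∑ j, ∑ k, (starRingEnd ℂ) (c j) * c k *
        ((γ (x j) (x k) : ℂ) + (ω (x j) (x k) : ℂ) * Complex.I) := by
  intro n x c
  set a : Fin n → ℝ := fun j => (c j).re with ha
  set b : Fin n → ℝ := fun j => (c j).im with hb
  set u : V := ∑ j, a j • x j with hu
  set v : V := ∑ j, b j • x j with hv
  have key : ∀ (f g : Fin n → ℝ) (B : V →ₗ[ℝ] V →ₗ[ℝ] ℝ),
      B (∑ j, f j • x j) (∑ k, g k • x k)
        = ∑ j, ∑ k, f j * g k * B (x j) (x k) := by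
    intro f g B
    simp only [map_sum, map_smul, LinearMap.sum_apply, LinearMap.smul_apply,
      smul_eq_mul, Finset.mul_sum]
    rw [Finset.sum_comm]
    refine Finset.sum_congr rfl fun j _ => Finset.sum_congr rfl fun k _ => by ring
  -- real symmetrized summand
  set R : Fin n → Fin n → ℝ := fun j k =>
    (a j * a k + b j * b k) * γ (x j) (x k)
      - (a j * b k - a k * b j) * ω (x j) (x k) with hR
  set T : Fin n → Fin n → ℂ := fun j k =>
    (starRingEnd ℂ) (c j) * c k *
      ((γ (x j) (x k) : ℂ) + (ω (x j) (x k) : ℂ) * Complex.I) with hT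
  have hanti : ∀ j k, T j k - (R j k : ℂ) = -(T k j - (R k j : ℂ)) := by
    intro j k
    have hc : ∀ i : Fin n, c i = (a i : ℂ) + (b i : ℂ) * Complex.I := by
      intro i; simp [ha, hb, Complex.ext_iff]
    have hcc : ∀ i : Fin n, (starRingEnd ℂ) (c i) = (a i : ℂ) - (b i : ℂ) * Complex.I := by
      intro i; rw [hc i]; simp [Complex.ext_iff]
    simp only [hT, hR]
    rw [hcc j, hcc k, hc j, hc k, hγsymm (x k) (x j), hωskew (x k) (x j)]
    push_cast
    simp only [Complex.ext_iff, Complex.add_re, Complex.add_im, Complex.sub_re,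
      Complex.sub_im, Complex.mul_re, Complex.mul_im, Complex.neg_re, Complex.neg_im,
      Complex.I_re, Complex.I_im, Complex.ofReal_re, Complex.ofReal_im]
    constructor <;> ring
  have hsum : ∑ j, ∑ k, T j k = ∑ j, ∑ k, (R j k : ℂ) := by
    have h0 : ∑ j, ∑ k, (T j k - (R j k : ℂ)) = 0 := by
      have h1 : ∑ j, ∑ k, (T j k - (R j k : ℂ))
          = ∑ k, ∑ j, (T j k - (R j k : ℂ)) := Finset.sum_comm
      have h2 : ∑ k, ∑ j, (T j k - (R j k : ℂ))
          = -∑ j, ∑ k, (T j k - (R j k : ℂ)) := by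
        rw [← Finset.sum_neg_distrib]
        refine Finset.sum_congr rfl fun k _ => ?_
        rw [← Finset.sum_neg_distrib]
        exact Finset.sum_congr rfl fun j _ => (hanti j k).symm ▸ rfl
      have := h1.trans h2
      linear_combination this / 2
    calc ∑ j, ∑ k, T j k
        = ∑ j, ∑ k, (T j k - (R j k : ℂ)) + ∑ j, ∑ k, (R j k : ℂ) := by
          rw [← Finset.sum_add_distrib]
          refine Finset.sum_congr rfl fun j _ => ?_
          rw [← Finset.sum_add_distrib]
          exact Finset.sum_congr rfl fun k _ => by ring
      _ = ∑ j, ∑ k, (R j k : ℂ) := by rw [h0, zero_add]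
  have hreal : ∑ j, ∑ k, R j k = γ u u + γ v v - 2 * ω u v := by
    have hγu : γ u u = ∑ j, ∑ k, a j * a k * γ (x j) (x k) := key a a γ
    have hγv : γ v v = ∑ j, ∑ k, b j * b k * γ (x j) (x k) := key b b γ
    have hωuv : ω u v = ∑ j, ∑ k, a j * b k * ω (x j) (x k) := key a b ω
    have hswap : ∑ j, ∑ k, a k * b j * ω (x j) (x k)
        = -∑ j, ∑ k, a j * b k * ω (x j) (x k) := by
      rw [Finset.sum_comm, ← Finset.sum_neg_distrib]
      refine Finset.sum_congr rfl fun j _ => ?_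
      rw [← Finset.sum_neg_distrib]
      refine Finset.sum_congr rfl fun k _ => ?_
      rw [hωskew (x k) (x j)]; ring
    have expand : ∑ j, ∑ k, R j k
        = (∑ j, ∑ k, a j * a k * γ (x j) (x k))
          + (∑ j, ∑ k, b j * b k * γ (x j) (x k))
          - (∑ j, ∑ k, a j * b k * ω (x j) (x k))
          + (∑ j, ∑ k, a k * b j * ω (x j) (x k)) := by
      rw [← Finset.sum_add_distrib, ← Finset.sum_sub_distrib, ← Finset.sum_add_distrib]
      refine Finset.sum_congr rfl fun j _ => ?_
      rw [← Finset.sum_add_distrib, ← Finset.sum_sub_distrib, ← Finset.sum_add_distrib]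
      exact Finset.sum_congr rfl fun k _ => by simp [hR]; ring
    rw [expand, hswap, hγu, hγv, hωuv]; ring
  have hfinal : (0:ℝ) ≤ γ u u + γ v v - 2 * ω u v := by
    nlinarith [hbound u v, hγpos u, hγpos v, sq_nonneg (γ u u - γ v v),
      sq_nonneg (γ u u + γ v v - 2 * ω u v)]
  calc (0:ℂ) ≤ ((γ u u + γ v v - 2 * ω u v : ℝ) : ℂ) := by
        exact_mod_cast hfinal
    _ = ∑ j, ∑ k, (R j k : ℂ) := by rw [← hreal]; push_cast; rfl
    _ = ∑ j, ∑ k, T j k := hsum.symm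
end

section
/- Let V be a real vector space, γ a positive semidefinite symmetric bilinear form and ω a skew-symmetric bilinear form on V. If h := γ + iω is a positive definite kernel on V, then ω(v,w)² ≤ γ(v,v)·γ(w,w) for all v, w ∈ V. -/
/-!
The Gram matrix of `h = γ + iω` at `(v, w)` is Hermitian (by the symmetry of `γ` and the
skew-symmetry of `ω`) and positive semidefinite, so its determinant
`γ(v,v)γ(w,w) - γ(v,w)² - ω(v,w)²` is nonnegative.
-/

open scoped ComplexOrder

namespace Matrix

theorem PosSemidef.of_sum_star_mul_mul_nonneg {ι R : Type*} [Fintype ι] [CommRing R]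
    [PartialOrder R] [StarRing R] {M : Matrix ι ι R} (hM : M.IsHermitian)
    (hpos : ∀ c : ι → R, 0 ≤ ∑ j, ∑ k, star (c j) * c k * M j k) : M.PosSemidef := by
  refine .of_dotProduct_mulVec_nonneg hM fun c => ?_
  simpa only [dotProduct, mulVec, Pi.star_apply, Finset.mul_sum, mul_comm, mul_left_comm,
    mul_assoc] using hpos c

theorem PosSemidef.apply_mul_apply_le {ι 𝕜 : Type*} [Fintype ι] [RCLike 𝕜] {M : Matrix ι ι 𝕜}
    (hM : M.PosSemidef) (i j : ι) : M i j * M j i ≤ M i i * M j j := by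
  have := (hM.submatrix ![i, j]).det_nonneg
  rw [det_fin_two] at this
  simpa using sub_nonneg.mp this

end Matrix

theorem stmt7_general {V : Type*} [AddCommGroup V] [Module ℝ V]
    (γ ω : V →ₗ[ℝ] V →ₗ[ℝ] ℝ)
    (hγsymm : ∀ v w, γ v w = γ w v)
    (hωskew : ∀ v w, ω v w = -ω w v)
    (hpd : ∀ (n : ℕ) (x : Fin n → V) (c : Fin n → ℂ),
      0 ≤ ∑ j, ∑ k, (starRingEnd ℂ) (c j) * c k *
        ((γ (x j) (x k) : ℂ) + (ω (x j) (x k) : ℂ) * Complex.I)) :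
    ∀ v w : V, (ω v w) ^ 2 ≤ γ v v * γ w w := by
  intro v w
  set M : Matrix (Fin 2) (Fin 2) ℂ :=
    .of fun j k => (γ (![v, w] j) (![v, w] k) : ℂ) + (ω (![v, w] j) (![v, w] k) : ℂ) * Complex.I
  have hM : M.IsHermitian := .ext fun j k => by
    apply Complex.ext <;> simp [M, hγsymm (![v, w] j), hωskew (![v, w] j)]
  have hMpos : M.PosSemidef := .of_sum_star_mul_mul_nonneg hM (hpd 2 ![v, w])
  have hω : ∀ u, ω u u = 0 := fun u => by linarith [hωskew u u]
  have hcs : γ v w * γ v w + ω v w * ω v w ≤ γ v v * γ w w := by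
    have := Complex.le_def.mp (hMpos.apply_mul_apply_le 0 1)
    simpa [M, hω, hγsymm w v, hωskew w v] using this.1
  nlinarith [sq_nonneg (γ v w)]

/-- If `γ` is positive semidefinite symmetric, `ω` skew-symmetric,
and `h = γ + iω` is a positive definite kernel on `V`, then
`ω(v,w)² ≤ γ(v,v)γ(w,w)` for all `v, w`. -/
theorem stmt7 {V : Type*} [AddCommGroup V] [Module ℝ V]
    (γ ω : V →ₗ[ℝ] V →ₗ[ℝ] ℝ)
    (hγsymm : ∀ v w, γ v w = γ w v)
    (hωskew : ∀ v w, ω v w = -ω w v)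
    (hγpos : ∀ v, 0 ≤ γ v v)
    (hpd : ∀ (n : ℕ) (x : Fin n → V) (c : Fin n → ℂ),
      0 ≤ ∑ j, ∑ k, (starRingEnd ℂ) (c j) * c k *
        ((γ (x j) (x k) : ℂ) + (ω (x j) (x k) : ℂ) * Complex.I)) :
    ∀ v w : V, (ω v w) ^ 2 ≤ γ v v * γ w w :=
  stmt7_general γ ω hγsymm hωskew hpd
end

section
/- Let A, B be bounded self-adjoint operators on a complex Hilbert space V. The block operator matrix [[A, B],[B, A]] on V ⊕ V is positive (as a self-adjoint operator) if and only if |⟨Bv, w⟩|² ≤ ⟨Av, v⟩·⟨Aw, w⟩ for all v, w ∈ V. -/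
open scoped ComplexInnerProductSpace ComplexOrder

/-!
With `z = ⟪B v, w⟫`, the block form at `(v, w)` is the real number
`⟪A v, v⟫ + ⟪A w, w⟫ + 2 Re z`. If `|z|² ≤ ⟪A v, v⟫⟪A w, w⟫`, AM–GM gives
`⟪A v, v⟫ + ⟪A w, w⟫ ≥ 2 |z| ≥ -2 Re z`. Conversely, evaluating the form at `(-t z • v, w)`
gives the real quadratic `⟪A v, v⟫ |z|² t² - 2 |z|² t + ⟪A w, w⟫ ≥ 0`, whose discriminant
condition is `|z|² ≤ ⟪A v, v⟫⟪A w, w⟫`.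
-/

open RCLike ComplexConjugate

lemma le_mul_of_forall_quadratic_nonneg {a b q : ℝ} (ha : 0 ≤ a) (hb : 0 ≤ b)
    (h : ∀ t : ℝ, 0 ≤ a * q * t ^ 2 - 2 * q * t + b) : q ≤ a * b := by
  rcases le_or_gt q 0 with hq | hq
  · exact hq.trans (mul_nonneg ha hb)
  · have hdiscrim := discrim_le_zero (a := a * q) (b := -2 * q) (c := b) fun t => by
      linarith [h t]
    rw [discrim] at hdiscrim
    nlinarith

lemma add_add_two_mul_re_nonneg {𝕜 : Type*} [RCLike 𝕜] {a b : ℝ} {z : 𝕜} (ha : 0 ≤ a)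
    (hb : 0 ≤ b) (h : ‖z‖ ^ 2 ≤ a * b) : 0 ≤ a + b + 2 * re z := by
  nlinarith [neg_le_of_abs_le (abs_re_le_norm z), norm_nonneg z, sq_nonneg (a - b)]

namespace ContinuousLinearMap

open scoped InnerProductSpace

variable {𝕜 E : Type*} [RCLike 𝕜] [NormedAddCommGroup E] [InnerProductSpace 𝕜 E]

/-- The quadratic form of the block operator `[[A, B], [B, A]]` on `E × E`, for symmetric `B`. -/
def blockReApplyInnerSelf (A B : E →L[𝕜] E) (v w : E) : ℝ :=
  A.reApplyInnerSelf v + A.reApplyInnerSelf w + 2 * re ⟪B v, w⟫_𝕜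

variable {A B : E →L[𝕜] E}

lemma inner_add_inner_eq_blockReApplyInnerSelf (hA : (A : E →ₗ[𝕜] E).IsSymmetric)
    (hB : (B : E →ₗ[𝕜] E).IsSymmetric) (v w : E) :
    ⟪v, A v + B w⟫_𝕜 + ⟪w, B v + A w⟫_𝕜 = blockReApplyInnerSelf A B v w := by
  have hAv : ⟪v, A v⟫_𝕜 = A.reApplyInnerSelf v := by
    rw [hA.coe_reApplyInnerSelf_apply]; exact (hA v v).symm
  have hAw : ⟪w, A w⟫_𝕜 = A.reApplyInnerSelf w := by
    rw [hA.coe_reApplyInnerSelf_apply]; exact (hA w w).symm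
  have hBvw : ⟪v, B w⟫_𝕜 + ⟪w, B v⟫_𝕜 = 2 * re ⟪B v, w⟫_𝕜 := by
    rw [← inner_conj_symm w, ← add_conj]
    exact congrArg (· + _) (hB v w).symm
  simp only [inner_add_right, blockReApplyInnerSelf, hAv, hAw]
  push_cast
  linear_combination hBvw

lemma blockReApplyInnerSelf_smul_left (v w : E) (c : 𝕜) :
    blockReApplyInnerSelf A B (c • v) w =
      ‖c‖ ^ 2 * A.reApplyInnerSelf v + A.reApplyInnerSelf w + 2 * re (conj c * ⟪B v, w⟫_𝕜) := by
  rw [blockReApplyInnerSelf, reApplyInnerSelf_smul, map_smul, inner_smul_left]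

lemma norm_inner_sq_le_of_blockReApplyInnerSelf_nonneg
    (h : ∀ v w, 0 ≤ blockReApplyInnerSelf A B v w) (v w : E) :
    ‖⟪B v, w⟫_𝕜‖ ^ 2 ≤ A.reApplyInnerSelf v * A.reApplyInnerSelf w := by
  set z := ⟪B v, w⟫_𝕜
  have hv : 0 ≤ A.reApplyInnerSelf v := by simpa [blockReApplyInnerSelf, reApplyInnerSelf_apply] using h v 0
  have hw : 0 ≤ A.reApplyInnerSelf w := by simpa [blockReApplyInnerSelf, reApplyInnerSelf_apply] using h 0 w
  refine le_mul_of_forall_quadratic_nonneg hv hw fun t => ?_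
  have hre : re (conj (-(t : 𝕜) * z) * z) = -t * ‖z‖ ^ 2 := by
    rw [map_mul conj, map_neg conj, conj_ofReal, mul_assoc, RCLike.conj_mul, ← ofReal_pow, ← ofReal_neg,
      ← ofReal_mul, ofReal_re]
  have hnorm : ‖-(t : 𝕜) * z‖ ^ 2 = t ^ 2 * ‖z‖ ^ 2 := by
    rw [norm_mul, norm_neg, norm_ofReal, mul_pow, sq_abs]
  have := h ((-(t : 𝕜) * z) • v) w
  rw [blockReApplyInnerSelf_smul_left, hre, hnorm] at this
  linarith

lemma blockReApplyInnerSelf_nonneg_iff (hA : ∀ v, 0 ≤ A.reApplyInnerSelf v) :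
    (∀ v w, 0 ≤ blockReApplyInnerSelf A B v w) ↔
      ∀ v w, ‖⟪B v, w⟫_𝕜‖ ^ 2 ≤ A.reApplyInnerSelf v * A.reApplyInnerSelf w :=
  ⟨norm_inner_sq_le_of_blockReApplyInnerSelf_nonneg, fun h v w =>
    add_add_two_mul_re_nonneg (hA v) (hA w) (h v w)⟩

end ContinuousLinearMap

/-- For bounded self-adjoint operators `A ≥ 0` and `B = B*` on a
complex Hilbert space `V`, the block matrix `[[A,B],[B,A]]` on `V ⊕ V` is
positive iff `|⟨Bv,w⟩|² ≤ ⟨Av,v⟩⟨Aw,w⟩` for all `v, w`. -/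
theorem stmt10 {V : Type*} [NormedAddCommGroup V] [InnerProductSpace ℂ V]
    (A B : V →L[ℂ] V)
    (hA : ∀ v w, ⟪A v, w⟫ = ⟪v, A w⟫)
    (hB : ∀ v w, ⟪B v, w⟫ = ⟪v, B w⟫)
    (hApos : ∀ v, 0 ≤ ⟪v, A v⟫) :
    (∀ v w : V, 0 ≤ ⟪v, A v + B w⟫ + ⟪w, B v + A w⟫) ↔
    (∀ v w : V, ‖⟪B v, w⟫‖ ^ 2 ≤ (⟪A v, v⟫).re * (⟪A w, w⟫).re) := by
  have hA_nonneg (v : V) : 0 ≤ A.reApplyInnerSelf v := by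
    rw [A.reApplyInnerSelf_apply, hA]
    exact (Complex.nonneg_iff.mp (hApos v)).1
  simp only [A.inner_add_inner_eq_blockReApplyInnerSelf hA hB, RCLike.ofReal_nonneg]
  exact A.blockReApplyInnerSelf_nonneg_iff hA_nonneg
end

section
/- Let H be a complex Hilbert space, θ a unitary involution on H with eigenspaces H^{±1}, and K ⊆ H a closed real (or complex) subspace that is θ-positive, i.e., ⟨θv, v⟩ ≥ 0 for all v ∈ K. Then K ∩ H^{-1} = {0}, and K is the graph of a linear operator Z : D(Z) ⊆ H^{1} → H^{-1} satisfying ‖Zv‖ ≤ ‖v‖ for all v ∈ D(Z), and D(Z) is closed in H^{1}. -/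
open scoped ComplexInnerProductSpace ComplexOrder

/-- Let `θ` be a unitary involution on a complex Hilbert space `H`
with eigenspaces `H^{±1}`, and `K ⊆ H` a closed subspace that is θ-positive
(`⟨θv, v⟩ ≥ 0` for `v ∈ K`). Then `K ∩ H^{-1} = {0}`, and `K` is the graph of a
contractive linear operator `Z : D(Z) ⊆ H¹ → H^{-1}` with `D(Z)` closed. -/
theorem stmt18 {H : Type*} [NormedAddCommGroup H] [InnerProductSpace ℂ H] [CompleteSpace H]
    (θ : H →L[ℂ] H)
    (hθunitary : ∀ x y, ⟪θ x, θ y⟫ = ⟪x, y⟫)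
    (hθ2 : ∀ x, θ (θ x) = x)
    (K : Submodule ℂ H)
    (hKclosed : IsClosed (K : Set H))
    (hKpos : ∀ v ∈ K, 0 ≤ ⟪θ v, v⟫) :
    (∀ x ∈ K, θ x = -x → x = 0) ∧
    ∃ (D : Submodule ℂ H) (Z : D →ₗ[ℂ] H),
      IsClosed (D : Set H) ∧
      (∀ d : D, θ (d : H) = (d : H)) ∧
      (∀ d : D, θ (Z d) = -(Z d)) ∧
      (∀ d : D, ‖Z d‖ ≤ ‖(d : H)‖) ∧
      (K : Set H) = {x : H | ∃ d : D, x = (d : H) + Z d} := by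
  classical
  set Pp : H →L[ℂ] H := (2:ℂ)⁻¹ • (ContinuousLinearMap.id ℂ H + θ) with hPpdef
  set Pm : H →L[ℂ] H := (2:ℂ)⁻¹ • (ContinuousLinearMap.id ℂ H - θ) with hPmdef
  have hPp_apply : ∀ v, Pp v = (2:ℂ)⁻¹ • (v + θ v) := fun v => rfl
  have hPm_apply : ∀ v, Pm v = (2:ℂ)⁻¹ • (v - θ v) := fun v => rfl
  have hsum : ∀ v, Pp v + Pm v = v := by
    intro v
    rw [hPp_apply, hPm_apply, ← smul_add]
    have h2 : (v + θ v) + (v - θ v) = (2:ℂ) • v := by module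
    rw [h2, smul_smul]
    norm_num
  have hθPp : ∀ v, θ (Pp v) = Pp v := by
    intro v
    rw [hPp_apply, map_smul, map_add, hθ2, add_comm]
  have hθPm : ∀ v, θ (Pm v) = -(Pm v) := by
    intro v
    rw [hPm_apply, map_smul, map_sub, hθ2, ← smul_neg, neg_sub]
  -- orthogonality of the two eigenspaces
  have horth : ∀ v, ⟪Pp v, Pm v⟫ = 0 := by
    intro v
    have h := hθunitary (Pp v) (Pm v)
    rw [hθPp, hθPm, inner_neg_right] at h
    linear_combination -h / 2
  -- inner product formula
  have hinner : ∀ v, ⟪θ v, v⟫ = ((‖Pp v‖ ^ 2 - ‖Pm v‖ ^ 2 : ℝ) : ℂ) := by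
    intro v
    have hv : θ v = Pp v - Pm v := by
      rw [hPp_apply, hPm_apply, ← smul_sub]
      have h2 : (v + θ v) - (v - θ v) = (2:ℂ) • θ v := by module
      rw [h2, smul_smul]
      norm_num
    have hv2 : v = Pp v + Pm v := (hsum v).symm
    have horth2 : ⟪Pm v, Pp v⟫ = 0 := by
      rw [← inner_conj_symm, horth v, map_zero]
    calc ⟪θ v, v⟫ = ⟪Pp v - Pm v, Pp v + Pm v⟫ := by rw [← hv, ← hv2]
      _ = ⟪Pp v, Pp v⟫ + ⟪Pp v, Pm v⟫ - ⟪Pm v, Pp v⟫ - ⟪Pm v, Pm v⟫ := by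
          rw [inner_sub_left, inner_add_right, inner_add_right]; ring
      _ = ⟪Pp v, Pp v⟫ - ⟪Pm v, Pm v⟫ := by rw [horth v, horth2]; ring
      _ = ((‖Pp v‖ ^ 2 - ‖Pm v‖ ^ 2 : ℝ) : ℂ) := by
          rw [inner_self_eq_norm_sq_to_K, inner_self_eq_norm_sq_to_K]
          norm_cast
  -- norm comparison on K
  have hle : ∀ v ∈ K, ‖Pm v‖ ≤ ‖Pp v‖ := by
    intro v hv
    have h := hKpos v hv
    rw [hinner v] at h
    rw [Complex.zero_le_real] at h
    have h2 : ‖Pm v‖ ^ 2 ≤ ‖Pp v‖ ^ 2 := by linarith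
    exact (pow_le_pow_iff_left₀ (norm_nonneg _) (norm_nonneg _) two_ne_zero).mp h2
  -- Pythagoras
  have hpyth : ∀ v, ‖v‖ ^ 2 = ‖Pp v‖ ^ 2 + ‖Pm v‖ ^ 2 := by
    intro v
    have := norm_add_sq (𝕜 := ℂ) (Pp v) (Pm v)
    rw [hsum v, horth v] at this
    simpa using this
  -- the lower bound on Pp restricted to K
  have hlow : ∀ v ∈ K, ‖v‖ ≤ Real.sqrt 2 * ‖Pp v‖ := by
    intro v hv
    have h1 := hle v hv
    have h2 := hpyth v
    have hs : Real.sqrt 2 ^ 2 = 2 := Real.sq_sqrt (by norm_num)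
    nlinarith [norm_nonneg v, norm_nonneg (Pp v), norm_nonneg (Pm v),
      Real.sqrt_nonneg 2, mul_nonneg (Real.sqrt_nonneg 2) (norm_nonneg (Pp v))]
  -- first conjunct
  have hfirst : ∀ x ∈ K, θ x = -x → x = 0 := by
    intro x hx hθx
    have hPpx : Pp x = 0 := by
      rw [hPp_apply, hθx]
      simp
    have := hlow x hx
    rw [hPpx, norm_zero, mul_zero] at this
    exact norm_le_zero_iff.mp this
  refine ⟨hfirst, ?_⟩
  -- the linear map L : K → H
  set L : K →ₗ[ℂ] H := Pp.toLinearMap.comp K.subtype with hLdef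
  have hL_apply : ∀ v : K, L v = Pp (v : H) := fun v => rfl
  have hLinj : Function.Injective L := by
    intro v w hvw
    have h : Pp ((v : H) - w) = 0 := by
      rw [map_sub, ← hL_apply, ← hL_apply, hvw, sub_self]
    have hmem : ((v : H) - w) ∈ K := K.sub_mem v.2 w.2
    have := hlow _ hmem
    rw [h, norm_zero, mul_zero] at this
    have : (v : H) - w = 0 := norm_le_zero_iff.mp this
    exact Subtype.ext (sub_eq_zero.mp this)
  haveI : CompleteSpace K := hKclosed.completeSpace_coe
  -- closedness of range
  set f : K →L[ℂ] H := Pp.comp K.subtypeL with hfdef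
  have hf_apply : ∀ v : K, f v = Pp (v : H) := fun v => rfl
  have hanti : AntilipschitzWith (⟨Real.sqrt 2, Real.sqrt_nonneg 2⟩ : NNReal) f := by
    apply ContinuousLinearMap.antilipschitz_of_bound
    intro v
    rw [hf_apply]
    exact hlow (v : H) v.2
  have hclosed_range : IsClosed (Set.range f) :=
    hanti.isClosed_range f.uniformContinuous
  set D : Submodule ℂ H := LinearMap.range L with hDdef
  have hDset : (D : Set H) = Set.range f := by
    ext x
    simp only [hDdef, LinearMap.mem_range, SetLike.mem_coe, Set.mem_range]
    constructor
    · rintro ⟨v, rfl⟩; exact ⟨v, rfl⟩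
    · rintro ⟨v, rfl⟩; exact ⟨v, rfl⟩
  set e : K ≃ₗ[ℂ] D := LinearEquiv.ofInjective L hLinj with hedef
  set Z : D →ₗ[ℂ] H := (Pm.toLinearMap.comp K.subtype).comp e.symm.toLinearMap with hZdef
  have hZ_apply : ∀ d : D, Z d = Pm ((e.symm d : K) : H) := fun d => rfl
  have hd_apply : ∀ d : D, (d : H) = Pp ((e.symm d : K) : H) := by
    intro d
    have : (e (e.symm d) : H) = L (e.symm d) := LinearEquiv.ofInjective_apply L (e.symm d)
    rw [e.apply_symm_apply] at this
    rw [this, hL_apply]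
  refine ⟨D, Z, ?_, ?_, ?_, ?_, ?_⟩
  · rw [hDset]; exact hclosed_range
  · intro d; rw [hd_apply d]; exact hθPp _
  · intro d; rw [hZ_apply d]; exact hθPm _
  · intro d
    rw [hZ_apply d, hd_apply d]
    exact hle _ (e.symm d).2
  · ext x
    simp only [SetLike.mem_coe, Set.mem_setOf_eq]
    constructor
    · intro hx
      refine ⟨e ⟨x, hx⟩, ?_⟩
      rw [hd_apply, hZ_apply, e.symm_apply_apply]
      exact (hsum x).symm
    · rintro ⟨d, rfl⟩
      rw [hd_apply, hZ_apply, hsum]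
      exact (e.symm d).2
end

section
/- Let E be a real Hilbert space, C a bounded skew-symmetric contraction on E with 1 + C² injective, V := (1+iC)(E) ⊆ E_ℂ the associated standard real subspace, and σ complex conjugation on E_ℂ. Then the modular objects of V are J = σ and Δ = ((1 - iC)(1 + iC)^{-1})², i.e., the antilinear involution S = σΔ^{1/2} has fixed point set exactly V. -/
open scoped ComplexInnerProductSpace

/-- Let `E` be a real Hilbert space (modelled as the fixed points
of a conjugation `σ` on a complex Hilbert space `H = E_ℂ`), and `C` a bounded
skew-symmetric contraction with `1 + C²` injective, so that
`V = (1 + iC)E` is a standard real subspace. Then the modular objects of `V`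
are `J = σ` and `Δ = ((1-iC)(1+iC)^{-1})²`: the antilinear involution
`S = σΔ^{1/2}` (where `Δ^{1/2}(1+iC)y = (1-iC)y` on the domain `(1+iC)E_ℂ`)
has fixed point set exactly `V`. -/
theorem stmt19 {H : Type*} [NormedAddCommGroup H] [InnerProductSpace ℂ H] [CompleteSpace H]
    (σ : H →ₛₗ[starRingEnd ℂ] H)
    (hσ2 : ∀ x, σ (σ x) = x)
    (hσinner : ∀ x y, ⟪σ x, σ y⟫ = ⟪y, x⟫)
    (C : H →L[ℂ] H)
    (hCσ : ∀ x, σ (C x) = C (σ x))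
    (hskew : ∀ x y, ⟪C x, y⟫ = -⟪x, C y⟫)
    (hcontr : ∀ x, ‖C x‖ ≤ ‖x‖)
    (hinj : ∀ x : H, x + C (C x) = 0 → x = 0) :
    {x : H | ∃ y : H, x = y + Complex.I • C y ∧
        σ (y - Complex.I • C y) = y + Complex.I • C y} =
      {x : H | ∃ v : H, σ v = v ∧ x = v + Complex.I • C v} := by
  ext x
  simp only [Set.mem_setOf_eq]
  constructor
  · rintro ⟨y, hx, hy⟩
    have key : σ y + Complex.I • C (σ y) = y + Complex.I • C y := by
      rw [map_sub, map_smulₛₗ, hCσ] at hy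
      simpa [Complex.conj_I, neg_smul, sub_neg_eq_add] using hy
    refine ⟨(2:ℂ)⁻¹ • (y + σ y), ?_, ?_⟩
    · rw [map_smulₛₗ, map_add, hσ2]
      simp [Complex.conj_ofNat, add_comm, smul_add]
    · rw [hx, map_smul, map_add, smul_comm Complex.I ((2:ℂ)⁻¹), ← smul_add]
      have : y + σ y + Complex.I • (C y + C (σ y))
          = (2:ℂ) • (y + Complex.I • C y) := by
        rw [smul_add, two_smul]
        nth_rewrite 2 [← key]
        abel
      rw [this, smul_smul]
      norm_num
  · rintro ⟨v, hv, hx⟩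
    refine ⟨v, hx, ?_⟩
    rw [map_sub, map_smulₛₗ, hCσ, hv]
    simp [Complex.conj_I, neg_smul, sub_neg_eq_add]
end
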